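/- Let R be a ring and V a right R-module of finite length whose composition factors (Jordan–Hölder factors) are pairwise non-isomorphic (V is multiplicity-free). Then the lattice of submodules of V is distributive: for all submodules A, B, C of V one has A ∩ (B + C) = (A ∩ B) + (A ∩ C). -/

import Mathlib

/-!
If `a ⊓ (b ⊔ c) ≠ (a ⊓ b) ⊔ (a ⊓ c)`, pick a covering `E ⋖ D` with `E = (a ⊓ b) ⊔ (a ⊓ c)` and
`D ≤ a ⊓ (b ⊔ c)`. Translating it up by `b ⊔ (a ⊓ c)` and then down by `c`, respectively up by
`c ⊔ (a ⊓ b)`, gives two covering pairs isomorphic to `(E, D)`, one below `c` and one above `c`.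
Both occur in a single composition series of `V`, which by Jordan–Hölder has the same factors as
the given multiplicity-free one: contradiction.
-/

universe u v

open JordanHolderLattice

namespace RelSeries

variable {α : Type*} {r : SetRel α α}

def HasStep (p : RelSeries r) (a b : α) : Prop :=
  ∃ i : Fin p.length, p i.castSucc = a ∧ p i.succ = b

lemma hasStep_cons (p : RelSeries r) (a : α) (h : (a, p.head) ∈ r) :
    (p.cons a h).HasStep a p.head :=
  ⟨⟨0, by simp⟩, rfl, rfl⟩

lemma HasStep.smash_left {p q : RelSeries r} {a b : α} (h : p.HasStep a b)
    (hpq : p.last = q.head) : (p.smash q hpq).HasStep a b := by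
  obtain ⟨i, rfl, rfl⟩ := h
  exact ⟨i.castAdd q.length, smash_castAdd hpq i, smash_succ_castAdd hpq i⟩

lemma HasStep.smash_right {p q : RelSeries r} {a b : α} (h : q.HasStep a b)
    (hpq : p.last = q.head) : (p.smash q hpq).HasStep a b := by
  obtain ⟨i, rfl, rfl⟩ := h
  exact ⟨i.natAdd p.length, smash_natAdd hpq i, smash_succ_natAdd hpq i⟩

end RelSeries

namespace CompositionSeries

section JordanHolder

variable {X : Type*} [Lattice X] [JordanHolderLattice X]

def IsMultiplicityFree (s : CompositionSeries X) : Prop :=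
  ∀ i j : Fin s.length, Iso (s i.castSucc, s i.succ) (s j.castSucc, s j.succ) → i = j

theorem Equivalent.isMultiplicityFree {s t : CompositionSeries X} (h : Equivalent s t)
    (hs : s.IsMultiplicityFree) : t.IsMultiplicityFree := by
  obtain ⟨f, hf⟩ := h
  intro i j hij
  have hi := f.apply_symm_apply i ▸ hf (f.symm i)
  have hj := f.apply_symm_apply j ▸ hf (f.symm j)
  exact f.symm.injective <| hs _ _ <| iso_trans hi <| iso_trans hij <| iso_symm hj

theorem IsMultiplicityFree.not_iso {s : CompositionSeries X} (hs : s.IsMultiplicityFree)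
    {u₁ v₁ u₂ v₂ : X} (h₁ : s.HasStep u₁ v₁) (h₂ : s.HasStep u₂ v₂) (hne : u₁ ≠ u₂) :
    ¬ Iso (u₁, v₁) (u₂, v₂) := by
  obtain ⟨i, rfl, rfl⟩ := h₁
  obtain ⟨j, rfl, rfl⟩ := h₂
  exact fun hij ↦ hne (congrArg _ (congrArg _ (hs i j hij)))

end JordanHolder

variable {X : Type*} [Lattice X] [IsModularLattice X] [WellFoundedLT X] [WellFoundedGT X]

theorem exists_head_last {x y : X} (h : x ≤ y) :
    ∃ t : CompositionSeries X, t.head = x ∧ t.last = y := by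
  obtain ⟨a, ha₀, n, han, ha⟩ := exists_covBy_seq_of_wellFoundedLT_wellFoundedGT_of_le h
  exact ⟨⟨n, fun i ↦ a i, fun i ↦ ha i i.2⟩, ha₀, han⟩

theorem exists_hasStep {x u v y : X} (hx : x ≤ u) (huv : u ⋖ v) (hy : v ≤ y) :
    ∃ t : CompositionSeries X, t.head = x ∧ t.last = y ∧ t.HasStep u v := by
  obtain ⟨p, rfl, hp⟩ := exists_head_last hx
  obtain ⟨q, rfl, rfl⟩ := exists_head_last hy
  exact ⟨p.smash (q.cons u huv) hp, RelSeries.head_smash hp,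
    (RelSeries.last_smash hp).trans (q.last_cons u huv),
    (q.hasStep_cons u huv).smash_right hp⟩

theorem IsMultiplicityFree.not_iso_of_covBy {s : CompositionSeries X} (hs : s.IsMultiplicityFree)
    {u₁ v₁ u₂ v₂ : X} (hu₁ : s.head ≤ u₁) (h₁ : u₁ ⋖ v₁) (h : v₁ ≤ u₂) (h₂ : u₂ ⋖ v₂)
    (hv₂ : v₂ ≤ s.last) : ¬ Iso (u₁, v₁) (u₂, v₂) := by
  obtain ⟨p, hp, rfl, hp₁⟩ := exists_hasStep hu₁ h₁ le_rfl
  obtain ⟨q, hq, hq', hq₂⟩ := exists_hasStep h h₂ hv₂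
  have hpq : p.last = q.head := hq.symm
  have ht : IsMultiplicityFree (p.smash q hpq) :=
    (jordan_holder s _ (by rw [RelSeries.head_smash, hp])
      (by rw [RelSeries.last_smash, hq'])).isMultiplicityFree hs
  exact ht.not_iso (hp₁.smash_left hpq) (hq₂.smash_right hpq) (h₁.lt.trans_le h).ne

end CompositionSeries

section ModularLattice

variable {X : Type*} [Lattice X] [IsModularLattice X]

theorem CovBy.sup_covBy_sup_and_iso {x y : X} (h : x ⋖ y) {d : X} (hd : y ⊓ d ≤ x) :
    x ⊔ d ⋖ y ⊔ d ∧ Iso (x, y) (x ⊔ d, y ⊔ d) := by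
  have hinf : (x ⊔ d) ⊓ y = x := by
    rw [sup_inf_assoc_of_le d h.le, inf_comm, sup_eq_left.mpr hd]
  have hsup : x ⊔ d ⊔ y = y ⊔ d := by
    rw [sup_right_comm, sup_eq_right.mpr h.le]
  have hcov : x ⊔ d ⋖ y ⊔ d := hsup ▸ covBy_sup_of_inf_covBy_right (by rwa [hinf])
  exact ⟨hcov, iso_symm (second_iso_of_eq hcov hsup hinf)⟩

theorem CovBy.inf_covBy_inf_and_iso {x y : X} (h : x ⋖ y) {d : X} (hd : y ≤ x ⊔ d) :
    x ⊓ d ⋖ y ⊓ d ∧ Iso (x, y) (x ⊓ d, y ⊓ d) := by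
  have hsup : x ⊔ y ⊓ d = y := by
    rw [inf_comm, ← sup_inf_assoc_of_le d h.le, inf_eq_right.mpr hd]
  have hinf : x ⊓ (y ⊓ d) = x ⊓ d := by
    rw [← inf_assoc, inf_eq_left.mpr h.le]
  have hcov : x ⋖ x ⊔ y ⊓ d := hsup.symm ▸ h
  exact ⟨hinf ▸ inf_covBy_of_covBy_sup_left hcov, second_iso_of_eq h hsup hinf⟩

theorem inf_sup_inf_sup_inf_eq_inf_sup_inf (a b c : X) :
    a ⊓ (b ⊔ c) ⊓ (b ⊔ a ⊓ c) = a ⊓ b ⊔ a ⊓ c := by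
  rw [inf_assoc, inf_eq_right.mpr (sup_le_sup_left inf_le_right b),
    inf_sup_assoc_of_le b inf_le_left]

theorem inf_sup_eq_of_forall_not_iso [IsStronglyAtomic X]
    (H : ∀ u₁ v₁ u₂ v₂ : X, u₁ ⋖ v₁ → v₁ ≤ u₂ → u₂ ⋖ v₂ → ¬ Iso (u₁, v₁) (u₂, v₂)) (a b c : X) :
    a ⊓ (b ⊔ c) = a ⊓ b ⊔ a ⊓ c := by
  by_contra hne
  obtain ⟨D, hE, hD⟩ := exists_covBy_le_of_lt (le_inf_sup.lt_of_ne' hne)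
  have hDb : D ⊓ (b ⊔ a ⊓ c) ≤ a ⊓ b ⊔ a ⊓ c :=
    (inf_le_inf_right _ hD).trans (inf_sup_inf_sup_inf_eq_inf_sup_inf a b c).le
  have hDc : D ⊓ (c ⊔ a ⊓ b) ≤ a ⊓ b ⊔ a ⊓ c := by
    have := inf_sup_inf_sup_inf_eq_inf_sup_inf a c b
    rw [sup_comm c, sup_comm (a ⊓ c)] at this
    exact (inf_le_inf_right _ hD).trans this.le
  obtain ⟨hcov₁, hiso₁⟩ := hE.sup_covBy_sup_and_iso hDb
  obtain ⟨hcov₁', hiso₁'⟩ := hcov₁.inf_covBy_inf_and_iso (d := c) <|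
    sup_le (hD.trans inf_le_right |>.trans <| sup_le_sup_right (le_sup_left.trans le_sup_right) c)
      (le_sup_right.trans le_sup_left)
  obtain ⟨hcov₂, hiso₂⟩ := hE.sup_covBy_sup_and_iso hDc
  exact H _ _ _ _ hcov₁' (inf_le_right.trans (le_sup_left.trans le_sup_right)) hcov₂
    (iso_trans (iso_symm hiso₁') (iso_trans (iso_symm hiso₁) hiso₂))

end ModularLattice

/-- Let `R` be a ring and `V` a right `R`-module (a left `Rᵐᵒᵖ`-module)
of finite length which is multiplicity-free: it admits a composition series from `⊥` to `⊤`
whose simple subquotients are pairwise non-isomorphic.  Then the lattice of submodules of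
`V` is distributive: `A ⊓ (B ⊔ C) = (A ⊓ B) ⊔ (A ⊓ C)` for all submodules `A`, `B`, `C`. -/
theorem submodule_lattice_distributive_of_multiplicity_free
    (R : Type u) [Ring R] (V : Type v) [AddCommGroup V] [Module Rᵐᵒᵖ V]
    (s : CompositionSeries (Submodule Rᵐᵒᵖ V))
    (hhead : s.head = ⊥) (hlast : s.last = ⊤)
    (hmf : ∀ i j : Fin s.length,
      JordanHolderLattice.Iso (s i.castSucc, s i.succ) (s j.castSucc, s j.succ) → i = j)
    (A B C : Submodule Rᵐᵒᵖ V) :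
    A ⊓ (B ⊔ C) = (A ⊓ B) ⊔ (A ⊓ C) := by
  obtain ⟨_, _⟩ := isFiniteLength_iff_isNoetherian_isArtinian.mp
    (isFiniteLength_of_exists_compositionSeries ⟨s, hhead, hlast⟩)
  refine inf_sup_eq_of_forall_not_iso (fun u₁ v₁ u₂ v₂ h₁ h h₂ ↦ ?_) A B C
  exact CompositionSeries.IsMultiplicityFree.not_iso_of_covBy hmf (hhead ▸ bot_le) h₁ h h₂
    (hlast ▸ le_top)
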